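/- The combination of local non-bossiness and strategy-proofness does not imply weak non-bossiness: there exists a locally non-bossy, strategy-proof mechanism under which a student can change the set of unassigned students by a deviation that keeps her own assignment at a real school. -/

import Mathlib

/-- A preference profile: each student has a (strict) preference relation over
`Option S`, where `none` is the outside option `s₀` and `some s` is school `s`. -/
abbrev Profile (N S : Type*) := N → Option S → Option S → Prop

/-- A school choice context: strict priorities and capacities for each school. -/
structure SchoolContext (N S : Type*) where
  prio : S → N → N → Prop
  prio_sto : ∀ s, IsStrictTotalOrder N (prio s)
  cap : S → ℕ
  cap_pos : ∀ s, 1 ≤ cap s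

/-- Well-formedness of a profile: each student's preference is a strict linear order. -/
def ProfWF {N S : Type*} (P : Profile N S) : Prop :=
  ∀ i, IsStrictTotalOrder (Option S) (P i)

/-- Feasibility of an assignment: capacities are respected. -/
def Feasible {N S : Type*} (C : SchoolContext N S) (μ : N → Option S) : Prop :=
  ∀ s : S, {i | μ i = some s}.ncard ≤ C.cap s

/-- Individual rationality: no student prefers the outside option to her assignment. -/
def IndRat {N S : Type*} (P : Profile N S) (μ : N → Option S) : Prop :=
  ∀ i, ¬ P i none (μ i)

/-- Non-wastefulness: no student prefers a school with an unfilled seat. -/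
def NonWasteful {N S : Type*} (C : SchoolContext N S) (P : Profile N S)
    (μ : N → Option S) : Prop :=
  ∀ i (s : S), P i (some s) (μ i) → C.cap s ≤ {j | μ j = some s}.ncard

/-- No justified envy. -/
def NoJustifiedEnvy {N S : Type*} (C : SchoolContext N S) (P : Profile N S)
    (μ : N → Option S) : Prop :=
  ∀ i j (s : S), P i (some s) (μ i) → μ j = some s → ¬ C.prio s i j

/-- Stability of a matching. -/
def IsStable {N S : Type*} (C : SchoolContext N S) (P : Profile N S)
    (μ : N → Option S) : Prop :=
  Feasible C μ ∧ IndRat P μ ∧ NonWasteful C P μ ∧ NoJustifiedEnvy C P μ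

/-- Strategy-proofness of a mechanism. -/
def StrategyProof {N S : Type*} [DecidableEq N] (Φ : Profile N S → (N → Option S)) : Prop :=
  ∀ (P : Profile N S), ProfWF P → ∀ (i : N) (P'i : Option S → Option S → Prop),
    ProfWF (Function.update P i P'i) →
    ¬ P i (Φ (Function.update P i P'i) i) (Φ P i)

/-- Local non-bossiness: a unilateral deviation that keeps the deviator's
assignment keeps the whole set of students assigned there. -/
def LocallyNonBossy {N S : Type*} [DecidableEq N] (Φ : Profile N S → (N → Option S)) : Prop :=
  ∀ (P : Profile N S), ProfWF P → ∀ (i : N) (P'i : Option S → Option S → Prop),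
    ProfWF (Function.update P i P'i) → ∀ s : Option S,
    Φ P i = s → Φ (Function.update P i P'i) i = s →
    {j | Φ P j = s} = {j | Φ (Function.update P i P'i) j = s}

/-- Replace the preferences of the members of coalition `Cs` by `P'`. -/
def updateGroup {N S : Type*} (P : Profile N S) (Cs : Set N) (P' : Profile N S) :
    Profile N S :=
  fun i a b => (i ∈ Cs ∧ P' i a b) ∨ (i ∉ Cs ∧ P i a b)

/-- Local group strategy-proofness: no coalition of schoolmates can jointly misreport so
that all are weakly better off and one strictly better off. -/
def LocallyGSP {N S : Type*} (Φ : Profile N S → (N → Option S)) : Prop :=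
  ¬ ∃ (s : Option S) (P : Profile N S) (Cs : Set N) (P' : Profile N S),
      ProfWF P ∧ ProfWF (updateGroup P Cs P') ∧
      (∀ i ∈ Cs, Φ P i = s) ∧
      (∀ j ∈ Cs, ¬ P j (Φ P j) (Φ (updateGroup P Cs P') j)) ∧
      (∃ i ∈ Cs, P i (Φ (updateGroup P Cs P') i) (Φ P i))

/-- Local group non-bossiness: if a coalition of schoolmates jointly misreports with each
member keeping her assignment, the set of students at their common school is unchanged. -/
def LocallyGroupNonBossy {N S : Type*} (Φ : Profile N S → (N → Option S)) : Prop :=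
  ∀ (s : Option S) (P : Profile N S) (Cs : Set N) (P' : Profile N S),
    ProfWF P → ProfWF (updateGroup P Cs P') →
    (∀ i ∈ Cs, Φ P i = s) →
    (∀ i ∈ Cs, Φ (updateGroup P Cs P') i = Φ P i) →
    {j | Φ P j = s} = {j | Φ (updateGroup P Cs P') j = s}

/-- Weak non-bossiness (Bando–Imamura): a unilateral deviation keeping the deviator's
assignment keeps the set of unassigned students. -/
def WeakNonBossy {N S : Type*} [DecidableEq N] (Φ : Profile N S → (N → Option S)) : Prop :=
  ∀ (P : Profile N S), ProfWF P → ∀ (i : N) (P'i : Option S → Option S → Prop),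
    ProfWF (Function.update P i P'i) →
    Φ (Function.update P i P'i) i = Φ P i →
    {j | Φ P j = none} = {j | Φ (Function.update P i P'i) j = none}

/-! Students 1 and 2 always get `s₁`, and student 1's report only decides whether student 3
gets `s₂` or nothing. No student can influence her own assignment, so the mechanism is
strategy-proof, and the roster of `s₁` never changes, so it is locally non-bossy. But when
student 1 switches from `s₂ P₁ s₁` to `s₁ P₁ s₂` she keeps `s₁` while student 3 becomes
unassigned. -/

theorem ProfWF.update {N S : Type*} [DecidableEq N] {P : Profile N S} (hP : ProfWF P) (i : N)
    {P'i : Option S → Option S → Prop} (hP'i : IsStrictTotalOrder (Option S) P'i) :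
    ProfWF (Function.update P i P'i) := by
  intro j
  by_cases hj : j = i
  · subst hj
    rwa [Function.update_self]
  · rw [Function.update_of_ne hj]
    exact hP j

theorem StrategyProof.of_update_apply_self {N S : Type*} [DecidableEq N]
    {Φ : Profile N S → (N → Option S)}
    (h : ∀ P i P'i, Φ (Function.update P i P'i) i = Φ P i) : StrategyProof Φ := by
  intro P hP i P'i _
  rw [h]
  have := hP i
  exact irrefl _

/- Students 1, 2, 3 are `0, 1, 2 : Fin 3` and schools `s₁, s₂` are `0, 1 : Fin 2`;
`P i a b` means that `i` prefers `a` to `b`. -/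
open Classical in
noncomputable def exampleMech (P : Profile (Fin 3) (Fin 2)) (i : Fin 3) : Option (Fin 2) :=
  if i = 2 then (if P 0 (some 1) (some 0) then some 1 else none) else some 0

theorem exampleMech_update_of_ne_zero (P : Profile (Fin 3) (Fin 2)) {i : Fin 3} (hi : i ≠ 0)
    (P'i : Option (Fin 2) → Option (Fin 2) → Prop) :
    exampleMech (Function.update P i P'i) = exampleMech P := by
  funext j
  rw [exampleMech, exampleMech, Function.update_of_ne hi.symm]

theorem exampleMech_zero (P : Profile (Fin 3) (Fin 2)) : exampleMech P 0 = some 0 := rfl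

theorem exampleMech_update_apply_self (P : Profile (Fin 3) (Fin 2)) (i : Fin 3)
    (P'i : Option (Fin 2) → Option (Fin 2) → Prop) :
    exampleMech (Function.update P i P'i) i = exampleMech P i := by
  by_cases hi : i = 0
  · subst hi
    rfl
  · rw [exampleMech_update_of_ne_zero P hi]

theorem setOf_exampleMech_eq_some_zero (P : Profile (Fin 3) (Fin 2)) :
    {j | exampleMech P j = some 0} = {0, 1} := by
  ext j
  fin_cases j <;> simp [exampleMech]

theorem setOf_exampleMech_eq_some_one_subset (P : Profile (Fin 3) (Fin 2)) :
    {j | exampleMech P j = some 1} ⊆ {2} := by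
  intro j hj
  fin_cases j <;> simp_all [exampleMech]

theorem exampleMech_feasible (C : SchoolContext (Fin 3) (Fin 2)) (hcap : 2 ≤ C.cap 0)
    (P : Profile (Fin 3) (Fin 2)) : Feasible C (exampleMech P) := by
  intro s
  fin_cases s
  · change {j | exampleMech P j = some 0}.ncard ≤ C.cap 0
    rwa [setOf_exampleMech_eq_some_zero, Set.ncard_pair (by decide)]
  · change {j | exampleMech P j = some 1}.ncard ≤ C.cap 1
    calc {j | exampleMech P j = some 1}.ncard
        ≤ ({2} : Set (Fin 3)).ncard :=
          Set.ncard_le_ncard (setOf_exampleMech_eq_some_one_subset P) (Set.finite_singleton _)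
      _ = 1 := Set.ncard_singleton _
      _ ≤ C.cap 1 := C.cap_pos 1

theorem locallyNonBossy_exampleMech : LocallyNonBossy exampleMech := by
  intro P _ i P'i _ s hs _
  by_cases hi : i = 0
  · subst hi hs
    rw [exampleMech_zero, setOf_exampleMech_eq_some_zero, setOf_exampleMech_eq_some_zero]
  · rw [exampleMech_update_of_ne_zero P hi]

theorem not_weakNonBossy_exampleMech : ¬ WeakNonBossy exampleMech := by
  intro h
  let rank₂₁ : Option (Fin 2) → ℕ
    | some 1 => 0 | some 0 => 1 | none => 2
  let rank₁₂ : Option (Fin 2) → ℕ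
    | some 0 => 0 | some 1 => 1 | none => 2
  have hinj₂₁ : rank₂₁.Injective := by decide
  have hinj₁₂ : rank₁₂.Injective := by decide
  let P : Profile (Fin 3) (Fin 2) := fun _ => Function.onFun (· < ·) rank₂₁
  have hP : ProfWF P := fun _ => hinj₂₁.isStrictTotalOrder_onFun _
  have hP' := hP.update 0 (hinj₁₂.isStrictTotalOrder_onFun (· < ·))
  have h2 := congrArg ((2 : Fin 3) ∈ ·) (h P hP 0 _ hP' rfl)
  simp [exampleMech, P, rank₂₁, rank₁₂] at h2

theorem stmt17_general (C : SchoolContext (Fin 3) (Fin 2))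
    (hcap0 : C.cap 0 = 2) :
    ∃ Ω : Profile (Fin 3) (Fin 2) → (Fin 3 → Option (Fin 2)),
      (∀ P, ProfWF P → Feasible C (Ω P)) ∧
        LocallyNonBossy Ω ∧ StrategyProof Ω ∧ ¬ WeakNonBossy Ω :=
  ⟨exampleMech, fun P _ => exampleMech_feasible C hcap0.ge P, locallyNonBossy_exampleMech,
    StrategyProof.of_update_apply_self exampleMech_update_apply_self,
    not_weakNonBossy_exampleMech⟩

/-- Local non-bossiness together with strategy-proofness does not imply weak
non-bossiness: in the three-student, two-school context with capacities (2,1),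
regardless of the priority profile, there is a locally non-bossy and strategy-proof
mechanism that is not weakly non-bossy. -/
theorem stmt17 (C : SchoolContext (Fin 3) (Fin 2))
    (hcap0 : C.cap 0 = 2) (hcap1 : C.cap 1 = 1) :
    ∃ Ω : Profile (Fin 3) (Fin 2) → (Fin 3 → Option (Fin 2)),
      (∀ P, ProfWF P → Feasible C (Ω P)) ∧
        LocallyNonBossy Ω ∧ StrategyProof Ω ∧ ¬ WeakNonBossy Ω :=
  stmt17_general C hcap0
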